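/- arXiv:1912.00814 — 7 statements merged into one kernel-verified Lean document; each statement's English description precedes it below -/
import Mathlib

section
/- Let D be a strongly connected digraph with some vertex of in-degree at most one or some vertex of out-degree at most one. Then the full vertex set V is a line of D. -/
open scoped Classical

/-- `stepsTo A n u v` : there is a directed walk of length `n` from `u` to `v`
in the digraph with arc relation `A`. -/
def stepsTo {V : Type*} (A : V → V → Prop) : ℕ → V → V → Prop
  | 0, u, v => u = v
  | n+1, u, v => ∃ w, A u w ∧ stepsTo A n w v

/-- A digraph is strongly connected if every vertex is reachable from every vertex. -/
def StronglyConnected {V : Type*} (A : V → V → Prop) : Prop :=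
  ∀ u v : V, ∃ n : ℕ, stepsTo A n u v

/-- The directed distance: the length of a shortest directed path from `u` to `v`. -/
noncomputable def ddist {V : Type*} (A : V → V → Prop) (u v : V) : ℕ :=
  sInf {n : ℕ | stepsTo A n u v}

/-- `btw A u v z` means `z ∈ [u,v]`, i.e. `z` lies on a shortest dipath from `u` to `v`. -/
def btw {V : Type*} (A : V → V → Prop) (u v z : V) : Prop :=
  ddist A u v = ddist A u z + ddist A z v

/-- The line generated by the ordered pair `(u,v)`:
`{z : u ∈ [z,v] or v ∈ [u,z] or z ∈ [u,v]}`. -/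
def line {V : Type*} (A : V → V → Prop) (u v : V) : Set V :=
  {z | btw A z v u ∨ btw A u z v ∨ btw A u v z}

/-- `L(D)`: the set of all lines generated by ordered pairs of distinct vertices. -/
def lineSet {V : Type*} (A : V → V → Prop) : Set (Set V) :=
  {S | ∃ u v : V, u ≠ v ∧ S = line A u v}

lemma stepsTo_snoc {V : Type*} (A : V → V → Prop) :
    ∀ n (u w v : V), stepsTo A n u w → A w v → stepsTo A (n+1) u v := by
  intro n
  induction n with
  | zero => intro u w v h hA; cases h; exact ⟨v, hA, rfl⟩
  | succ n ih =>
    rintro u w v ⟨a, hua, ha⟩ hA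
    exact ⟨a, hua, ih a w v ha hA⟩

lemma stepsTo_unsnoc {V : Type*} (A : V → V → Prop) :
    ∀ n (u v : V), stepsTo A (n+1) u v → ∃ w, stepsTo A n u w ∧ A w v := by
  intro n
  induction n with
  | zero => rintro u v ⟨w, hu, h⟩; cases h; exact ⟨u, rfl, hu⟩
  | succ n ih =>
    rintro u v ⟨a, hua, ha⟩
    obtain ⟨w, hw, hwv⟩ := ih a v ha
    exact ⟨w, ⟨a, hua, hw⟩, hwv⟩

lemma stepsTo_flip {V : Type*} (A : V → V → Prop) :
    ∀ n (u v : V), stepsTo (fun a b => A b a) n u v ↔ stepsTo A n v u := by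
  intro n
  induction n with
  | zero => intro u v; constructor <;> (intro h; exact h.symm)
  | succ n ih =>
    intro u v
    constructor
    · rintro ⟨w, hw, h⟩
      exact stepsTo_snoc A n v w u ((ih w v).mp h) hw
    · intro h
      obtain ⟨w, hw, hwu⟩ := stepsTo_unsnoc A n v u h
      exact ⟨w, hwu, (ih w v).mpr hw⟩

lemma ddist_self {V : Type*} (A : V → V → Prop) (u : V) : ddist A u u = 0 :=
  Nat.eq_zero_of_le_zero (Nat.sInf_le rfl)

lemma btw_flip {V : Type*} (A : V → V → Prop) (u v z : V) :
    _root_.btw (fun a b => A b a) u v z ↔ _root_.btw A v u z := by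
  unfold _root_.btw ddist
  simp only [stepsTo_flip]
  constructor <;> (intro h; omega)

lemma line_flip {V : Type*} (A : V → V → Prop) (u v : V) :
    line (fun a b => A b a) u v = line A v u := by
  ext z
  simp only [line, Set.mem_setOf_eq, btw_flip]
  tauto

lemma core {V : Type*} [Fintype V] [Nontrivial V] (A : V → V → Prop)
    (hsc : StronglyConnected A) (y : V) (hin : ({x | A x y}).ncard ≤ 1) :
    (Set.univ : Set V) ∈ lineSet A := by
  obtain ⟨u, hu⟩ := exists_ne y
  have hne : {n : ℕ | stepsTo A n u y}.Nonempty := hsc u y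
  have hd : stepsTo A (ddist A u y) u y := Nat.sInf_mem hne
  have hdpos : ddist A u y ≠ 0 := by
    intro h0; rw [h0] at hd; exact hu hd
  obtain ⟨m, hm⟩ : ∃ m, ddist A u y = m + 1 := ⟨ddist A u y - 1, by omega⟩
  rw [hm] at hd
  obtain ⟨x, hux, hxy⟩ := stepsTo_unsnoc A m u y hd
  have hxney : x ≠ y := by
    intro h; rw [h] at hux
    have : ddist A u y ≤ m := Nat.sInf_le hux
    omega
  have huniq : ∀ w, A w y → w = x := by
    intro w hw
    exact (Set.ncard_le_one_iff (Set.toFinite _)).mp hin hw hxy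
  have hdxy : ddist A x y = 1 := by
    have h1 : ddist A x y ≤ 1 := Nat.sInf_le ⟨y, hxy, rfl⟩
    have h0 : ddist A x y ≠ 0 := by
      intro h0
      have hm2 : stepsTo A (ddist A x y) x y := Nat.sInf_mem (hsc x y)
      rw [h0] at hm2
      exact hxney hm2
    omega
  refine ⟨x, y, hxney, (Set.eq_univ_of_forall ?_).symm⟩
  intro z
  by_cases hz : z = y
  · subst hz
    right; left
    show ddist A x z = ddist A x z + ddist A z z
    rw [ddist_self]
    omega
  · left
    show ddist A z y = ddist A z x + ddist A x y
    have hzd : stepsTo A (ddist A z y) z y := Nat.sInf_mem (hsc z y)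
    have hzpos : ddist A z y ≠ 0 := by
      intro h0; rw [h0] at hzd; exact hz hzd
    obtain ⟨k, hk⟩ : ∃ k, ddist A z y = k + 1 := ⟨ddist A z y - 1, by omega⟩
    rw [hk] at hzd
    obtain ⟨w, hzw, hwy⟩ := stepsTo_unsnoc A k z y hzd
    rw [huniq w hwy] at hzw
    have h1 : ddist A z x ≤ k := Nat.sInf_le hzw
    have h2 : ddist A z y ≤ ddist A z x + 1 :=
      Nat.sInf_le (stepsTo_snoc A _ z x y (Nat.sInf_mem (hsc z x)) hxy)
    omega

theorem stmt0 {V : Type*} [Fintype V] [Nontrivial V] (A : V → V → Prop)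
    (hsc : StronglyConnected A)
    (hdeg : ∃ y : V, ({x | A x y}).ncard ≤ 1 ∨ ({x | A y x}).ncard ≤ 1) :
    (Set.univ : Set V) ∈ lineSet A := by
  obtain ⟨y, hy | hy⟩ := hdeg
  · exact core A hsc y hy
  · have hsc' : StronglyConnected (fun a b => A b a) := by
      intro a b
      obtain ⟨n, hn⟩ := hsc b a
      exact ⟨n, (stepsTo_flip A n a b).mpr hn⟩
    obtain ⟨u, v, huv, hS⟩ := core (fun a b => A b a) hsc' y (by simpa using hy)
    exact ⟨v, u, huv.symm, hS.trans (line_flip A u v)⟩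
end

section
/- Let D be a strongly connected oriented graph, uv an arc, and x a vertex distinct from u and v. If d(x,v) ≤ d(x,u) and d(u,x) ≤ d(v,x), then x does not belong to the line generated by (u,v). In particular, if xv and ux are both arcs, then x is not in the line of (u,v). -/
open scoped Classical

lemma ddist_eq_zero_iff {V : Type*} (A : V → V → Prop) (hsc : StronglyConnected A)
    (u v : V) : ddist A u v = 0 ↔ u = v := by
  constructor
  · intro h
    rcases Nat.sInf_eq_zero.mp h with h0 | hemp
    · exact h0
    · exact absurd (hsc u v) (by simpa [Set.eq_empty_iff_forall_notMem] using hemp)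
  · rintro rfl
    exact Nat.sInf_eq_zero.mpr (Or.inl rfl)

lemma ddist_le_one {V : Type*} (A : V → V → Prop) {u v : V} (h : A u v) :
    ddist A u v ≤ 1 :=
  Nat.sInf_le ⟨v, h, rfl⟩

theorem stmt4 {V : Type*} [Fintype V] (A : V → V → Prop)
    (hanti : ∀ u v : V, ¬ (A u v ∧ A v u))
    (hsc : StronglyConnected A)
    (u v x : V) (huv : A u v) (hxu : x ≠ u) (hxv : x ≠ v) :
    (ddist A x v ≤ ddist A x u → ddist A u x ≤ ddist A v x → x ∉ line A u v) ∧
    (A x v → A u x → x ∉ line A u v) := by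
  have hne : u ≠ v := by
    rintro rfl; exact hanti u u ⟨huv, huv⟩
  have hpos : ∀ a b : V, a ≠ b → 1 ≤ ddist A a b := fun a b hab =>
    Nat.one_le_iff_ne_zero.mpr (fun h0 => hab ((ddist_eq_zero_iff A hsc a b).mp h0))
  have hduv : ddist A u v = 1 :=
    le_antisymm (ddist_le_one A huv) (hpos u v hne)
  have main : ddist A x v ≤ ddist A x u → ddist A u x ≤ ddist A v x → x ∉ line A u v := by
    intro h1 h2 hx
    rcases hx with h | h | h
    · -- ddist x v = ddist x u + ddist u v
      simp only [_root_.btw] at h; rw [hduv] at h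
      omega
    · -- ddist u x = ddist u v + ddist v x
      simp only [_root_.btw] at h; rw [hduv] at h
      have := hpos u x (Ne.symm hxu)
      have := hpos v x (Ne.symm hxv)
      omega
    · -- ddist u v = ddist u x + ddist x v
      simp only [_root_.btw] at h; rw [hduv] at h
      have hux := hpos u x (Ne.symm hxu)
      have hxv' := hpos x v hxv
      omega
  refine ⟨main, fun hxva hux => main ?_ ?_⟩
  · exact le_trans (ddist_le_one A hxva) (hpos x u hxu)
  · exact le_trans (ddist_le_one A hux) (hpos v x (Ne.symm hxv))
end

section
/- Let D be a strongly connected oriented graph, uv an arc, and x a vertex distinct from u and v with ux and vx both arcs of D. If x belongs to the line generated by (u,v), then d(x,v) ≥ 3. -/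
open scoped Classical

lemma ddist_eq_one {V : Type*} {A : V → V → Prop} {u v : V}
    (huv : A u v) (hne : u ≠ v) : ddist A u v = 1 := by
  have h1 : stepsTo A 1 u v := ⟨v, huv, rfl⟩
  have hle : ddist A u v ≤ 1 := Nat.sInf_le h1
  have h0 : ddist A u v ≠ 0 := by
    intro h
    have : stepsTo A (ddist A u v) u v := Nat.sInf_mem (⟨1, h1⟩ : ∃ n, stepsTo A n u v)
    rw [h] at this
    exact hne this
  omega

theorem stmt5 {V : Type*} [Fintype V] (A : V → V → Prop)
    (hanti : ∀ u v : V, ¬ (A u v ∧ A v u))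
    (hsc : StronglyConnected A)
    (u v x : V) (huv : A u v) (hxu : x ≠ u) (hxv : x ≠ v)
    (h1 : A u x) (h2 : A v x) (hmem : x ∈ line A u v) :
    3 ≤ ddist A x v := by
  have hnuu : ∀ a b : V, A a b → a ≠ b := by
    intro a b hab h; subst h; exact hanti a a ⟨hab, hab⟩
  have duv : ddist A u v = 1 := ddist_eq_one huv (hnuu u v huv)
  have dux : ddist A u x = 1 := ddist_eq_one h1 (hnuu u x h1)
  have dvx : ddist A v x = 1 := ddist_eq_one h2 (hnuu v x h2)
  -- d(x,u) ≥ 2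
  have hxu2 : 2 ≤ ddist A x u := by
    have hmemxu : stepsTo A (ddist A x u) x u := Nat.sInf_mem (hsc x u)
    have hne0 : ddist A x u ≠ 0 := by
      intro h; rw [h] at hmemxu; exact hxu hmemxu
    have hne1 : ddist A x u ≠ 1 := by
      intro h; rw [h] at hmemxu
      obtain ⟨w, hw, hw'⟩ := hmemxu
      rw [hw'] at hw
      exact hanti x u ⟨hw, h1⟩
    omega
  rcases hmem with h | h | h
  · unfold _root_.btw at h
    rw [duv] at h
    omega
  · unfold _root_.btw at h
    rw [dux, duv, dvx] at h
    omega
  · unfold _root_.btw at h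
    rw [duv, dux] at h
    have hx0 : ddist A x v = 0 := by omega
    have hmemxv : stepsTo A (ddist A x v) x v := Nat.sInf_mem (hsc x v)
    rw [hx0] at hmemxv
    exact absurd hmemxv hxv
end

section
/- Let D be a strongly connected tournament, a a vertex, and B a subset of the out-neighborhood a⁺ of a. Then the map sending z ∈ B to the line generated by (a,z) is injective; hence the family {line(a,z) : z ∈ B} has exactly |B| elements. Similarly, for C a subset of the in-neighborhood a⁻, the map z ↦ line(z,a) is injective on C. -/
open scoped Classical

theorem stmt7 {V : Type*} [Fintype V] (A : V → V → Prop)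
    (hanti : ∀ u v : V, ¬ (A u v ∧ A v u))
    (hcomp : ∀ u v : V, u ≠ v → A u v ∨ A v u)
    (hsc : StronglyConnected A)
    (a : V) (B C : Set V) (hB : B ⊆ {x | A a x}) (hC : C ⊆ {y | A y a}) :
    (Set.InjOn (fun z => line A a z) B ∧ ((fun z => line A a z) '' B).ncard = B.ncard) ∧
    (Set.InjOn (fun z => line A z a) C ∧ ((fun z => line A z a) '' C).ncard = C.ncard) := by
  have hmem : ∀ u v : V, stepsTo A (ddist A u v) u v := fun u v => Nat.sInf_mem (hsc u v)
  have hzero : ∀ u v : V, ddist A u v = 0 → u = v := by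
    intro u v h
    have h2 := hmem u v
    rw [h] at h2
    exact h2
  have hself : ∀ u : V, ddist A u u = 0 :=
    fun u => Nat.le_zero.mp (Nat.sInf_le (by exact rfl : stepsTo A 0 u u))
  have hone : ∀ u v : V, A u v → ddist A u v = 1 := by
    intro u v h
    have hle : ddist A u v ≤ 1 := Nat.sInf_le ⟨v, h, rfl⟩
    have hne0 : ddist A u v ≠ 0 := by
      intro h0
      have := hzero u v h0
      subst this
      exact hanti u u ⟨h, h⟩
    omega
  have noself : ∀ u : V, ¬ A u u := fun u h => hanti u u ⟨h, h⟩
  have hBinj : Set.InjOn (fun z => line A a z) B := by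
    intro z hz z' hz' heq
    simp only at heq
    by_contra hzz
    have haz : A a z := hB hz
    have haz' : A a z' := hB hz'
    have d1 : ddist A a z = 1 := hone a z haz
    have d1' : ddist A a z' = 1 := hone a z' haz'
    rcases hcomp z z' hzz with hA | hA
    · -- z ∈ line A a z, hence z ∈ line A a z'
      have hzl : z ∈ line A a z' := by
        rw [← heq]
        exact Or.inr (Or.inr (by simp [_root_.btw, hself z]))
      have dzz : ddist A z z' = 1 := hone z z' hA
      rcases hzl with h | h | h
      · -- btw A z z' a : ddist z z' = ddist z a + ddist a z'
        unfold _root_.btw at h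
        rw [dzz, d1'] at h
        have : z = a := hzero z a (by omega)
        subst this
        exact noself z haz
      · unfold _root_.btw at h
        rw [d1, d1'] at h
        exact hzz (hzero z' z (by omega)).symm
      · unfold _root_.btw at h
        rw [d1, d1', dzz] at h
        omega
    · -- z' ∈ line A a z', hence z' ∈ line A a z
      have hzl : z' ∈ line A a z := by
        rw [heq]
        exact Or.inr (Or.inr (by simp [_root_.btw, hself z']))
      have dzz : ddist A z' z = 1 := hone z' z hA
      rcases hzl with h | h | h
      · unfold _root_.btw at h
        rw [dzz, d1] at h
        have : z' = a := hzero z' a (by omega)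
        subst this
        exact noself z' haz'
      · unfold _root_.btw at h
        rw [d1, d1'] at h
        exact hzz (hzero z z' (by omega))
      · unfold _root_.btw at h
        rw [d1, d1', dzz] at h
        omega
  have hCinj : Set.InjOn (fun z => line A z a) C := by
    intro z hz z' hz' heq
    simp only at heq
    by_contra hzz
    have hza : A z a := hC hz
    have hza' : A z' a := hC hz'
    have d1 : ddist A z a = 1 := hone z a hza
    have d1' : ddist A z' a = 1 := hone z' a hza'
    rcases hcomp z z' hzz with hA | hA
    · have hzl : z' ∈ line A z a := by
        rw [heq]
        exact Or.inr (Or.inr (by simp [_root_.btw, hself z']))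
      have dzz : ddist A z z' = 1 := hone z z' hA
      rcases hzl with h | h | h
      · -- btw A z' a z : ddist z' a = ddist z' z + ddist z a
        unfold _root_.btw at h
        rw [d1, d1'] at h
        exact hzz (hzero z' z (by omega)).symm
      · -- btw A z z' a : ddist z z' = ddist z a + ddist a z'
        unfold _root_.btw at h
        rw [d1, dzz] at h
        have : a = z' := hzero a z' (by omega)
        subst this
        exact noself a hza'
      · -- btw A z a z' : ddist z a = ddist z z' + ddist z' a
        unfold _root_.btw at h
        rw [d1, d1', dzz] at h
        omega
    · have hzl : z ∈ line A z' a := by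
        rw [← heq]
        exact Or.inr (Or.inr (by simp [_root_.btw, hself z]))
      have dzz : ddist A z' z = 1 := hone z' z hA
      rcases hzl with h | h | h
      · -- btw A z a z' : ddist z a = ddist z z' + ddist z' a
        unfold _root_.btw at h
        rw [d1, d1'] at h
        exact hzz (hzero z z' (by omega))
      · -- btw A z' z a : ddist z' z = ddist z' a + ddist a z
        unfold _root_.btw at h
        rw [d1', dzz] at h
        have : a = z := hzero a z (by omega)
        subst this
        exact noself a hza
      · -- btw A z' a z : ddist z' a = ddist z' z + ddist z a
        unfold _root_.btw at h
        rw [d1, d1', dzz] at h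
        omega
  exact ⟨⟨hBinj, Set.ncard_image_of_injOn hBinj⟩, ⟨hCinj, Set.ncard_image_of_injOn hCinj⟩⟩
end

section
/- Let D be a strongly connected tournament and a a vertex. If x ∈ a⁺ and y ∈ a⁻ satisfy line(a,x) = line(y,a), then xy is an arc of D. -/
open scoped Classical

lemma stepsTo_trans {V : Type*} {A : V → V → Prop} :
    ∀ {m n : ℕ} {u v w : V}, stepsTo A m u v → stepsTo A n v w → stepsTo A (m + n) u w := by
  intro m
  induction m with
  | zero =>
    intro n u v w h1 h2
    cases h1
    simpa using h2
  | succ m ih =>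
    intro n u v w h1 h2
    obtain ⟨z, hz, h1⟩ := h1
    have : stepsTo A (m + n + 1) u w := ⟨z, hz, ih h1 h2⟩
    have he : m + 1 + n = m + n + 1 := by omega
    rw [he]
    exact this

theorem stmt9 {V : Type*} [Fintype V] (A : V → V → Prop)
    (hanti : ∀ u v : V, ¬ (A u v ∧ A v u))
    (hcomp : ∀ u v : V, u ≠ v → A u v ∨ A v u)
    (hsc : StronglyConnected A)
    (a x y : V) (hx : A a x) (hy : A y a) (hrep : line A a x = line A y a) :
    A x y := by
  have hmem : ∀ u v : V, stepsTo A (ddist A u v) u v := fun u v => Nat.sInf_mem (hsc u v)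
  have hle : ∀ {n : ℕ} {u v : V}, stepsTo A n u v → ddist A u v ≤ n := fun h => Nat.sInf_le h
  have hself : ∀ u : V, ddist A u u = 0 := fun u =>
    Nat.le_zero.mp (hle (show stepsTo A 0 u u from rfl))
  have hzero : ∀ {u v : V}, ddist A u v = 0 → u = v := by
    intro u v h
    have := hmem u v
    rw [h] at this
    exact this
  have hone : ∀ {u v : V}, ddist A u v = 1 → A u v := by
    intro u v h
    have := hmem u v
    rw [h] at this
    obtain ⟨w, hw, hw'⟩ := this
    cases hw'
    exact hw
  have harc : ∀ {u v : V}, u ≠ v → A u v → ddist A u v = 1 := by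
    intro u v huv h
    have h1 : ddist A u v ≤ 1 := hle ⟨v, h, rfl⟩
    have h0 : ddist A u v ≠ 0 := fun h0 => huv (hzero h0)
    omega
  have htri : ∀ u v w : V, ddist A u w ≤ ddist A u v + ddist A v w :=
    fun u v w => hle (stepsTo_trans (hmem u v) (hmem v w))
  -- basic distinctness
  have hax : a ≠ x := by rintro rfl; exact hanti a a ⟨hx, hx⟩
  have hya : y ≠ a := by rintro rfl; exact hanti y y ⟨hy, hy⟩
  have hxy : x ≠ y := by rintro rfl; exact hanti a x ⟨hx, hy⟩
  by_contra hnxy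
  have hyx : A y x := (hcomp x y hxy).resolve_left hnxy
  have dax : ddist A a x = 1 := harc hax hx
  have dya : ddist A y a = 1 := harc hya hy
  have dyx : ddist A y x = 1 := harc (Ne.symm hxy) hyx
  set k := ddist A x y with hk
  have hk0 : k ≠ 0 := fun h => hxy (hzero h)
  have hk1 : k ≠ 1 := fun h => hnxy (hone h)
  have hk2 : 2 ≤ k := by omega
  -- y ∈ line a x, deduce d(a,y) = k + 1
  have hyline : y ∈ line A a x := by
    rw [hrep]
    right; right
    show ddist A y a = ddist A y y + ddist A y a
    rw [hself]
    omega
  have day : ddist A a y = 1 + k := by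
    rcases hyline with h | h | h
    · exfalso
      have : ddist A y x = ddist A y a + ddist A a x := h
      omega
    · have : ddist A a y = ddist A a x + ddist A x y := h
      omega
    · exfalso
      have h' : ddist A a x = ddist A a y + ddist A y x := h
      have : ddist A a y = 0 := by omega
      exact hya (hzero this).symm
  -- take first vertex w on a shortest x→y path
  obtain ⟨m, hm⟩ : ∃ m, k = m + 1 := ⟨k - 1, by omega⟩
  have hsxy : stepsTo A (m + 1) x y := by rw [← hm]; exact hmem x y
  obtain ⟨w, hxw, hwy⟩ := hsxy
  have hxw' : x ≠ w := by rintro rfl; exact hanti x x ⟨hxw, hxw⟩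
  have dxw : ddist A x w = 1 := harc hxw' hxw
  have dwy_le : ddist A w y ≤ m := hle hwy
  have dwy : ddist A w y = m := by
    have := htri x w y
    omega
  have daw : ddist A a w = 2 := by
    have h1 : ddist A a w ≤ 2 := by have := htri a x w; omega
    have h2 : ddist A a y ≤ ddist A a w + ddist A w y := htri a w y
    omega
  have hwa : w ≠ a := by
    rintro rfl
    rw [hself] at daw
    omega
  have hnaw : ¬ A a w := by
    intro h
    have : ddist A a w ≤ 1 := hle ⟨w, h, rfl⟩
    omega
  have hAwa : A w a := (hcomp a w (Ne.symm hwa)).resolve_left hnaw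
  have dwa : ddist A w a = 1 := harc hwa hAwa
  have hwline : w ∈ line A a x := by
    right; left
    show ddist A a w = ddist A a x + ddist A x w
    omega
  rw [hrep] at hwline
  have dyw_le : ddist A y w ≤ 2 := by have := htri y x w; omega
  rcases hwline with h | h | h
  · have : ddist A w a = ddist A w y + ddist A y a := h
    omega
  · have : ddist A y w = ddist A y a + ddist A a w := h
    omega
  · have h' : ddist A y a = ddist A y w + ddist A w a := h
    have hyw : ddist A y w = 0 := by omega
    have : y = w := hzero hyw
    subst this
    rw [hself] at dwy
    omega
end

section
/- Let B be an orientation of a complete bipartite graph with parts X and Y of oriented diameter at most three. For distinct u,v in the same part X, the line generated by (u,v) equals {u,v} ∪ (u⁺ ∩ v⁻) ∪ (u⁻ ∩ v⁺); in particular its intersection with X is exactly {u,v}. -/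
open scoped Classical

lemma stepsTo_add {V : Type*} (A : V → V → Prop) :
    ∀ {m n : ℕ} {u w v : V}, stepsTo A m u w → stepsTo A n w v →
    stepsTo A (m + n) u v := by
  intro m
  induction m with
  | zero =>
    intro n u w v h1 h2
    cases h1
    simpa using h2
  | succ m ih =>
    intro n u w v h1 h2
    obtain ⟨x, hx, hs⟩ := h1
    rw [Nat.succ_add]
    exact ⟨x, hx, ih hs h2⟩

theorem stmt16 {V : Type*} [Fintype V] (A : V → V → Prop)
    (X Y : Set V)
    (hpart : ∀ v : V, (v ∈ X ∧ v ∉ Y) ∨ (v ∈ Y ∧ v ∉ X))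
    (hanti : ∀ u v : V, ¬ (A u v ∧ A v u))
    (hadj : ∀ u v : V, (A u v ∨ A v u) ↔ ((u ∈ X ∧ v ∈ Y) ∨ (u ∈ Y ∧ v ∈ X)))
    (hdiam : ∀ u v : V, ∃ n : ℕ, n ≤ 3 ∧ stepsTo A n u v)
    (u v : V) (hu : u ∈ X) (hv : v ∈ X) (huv : u ≠ v) :
    line A u v = {u, v} ∪ ({z | A u z} ∩ {z | A z v}) ∪ ({z | A z u} ∩ {z | A v z}) ∧
    line A u v ∩ X = {u, v} := by
  -- basic facts about ddist
  have hne : ∀ a b : V, ∃ n, stepsTo A n a b := fun a b => by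
    obtain ⟨n, _, hs⟩ := hdiam a b; exact ⟨n, hs⟩
  have hmem : ∀ a b : V, stepsTo A (ddist A a b) a b := fun a b =>
    Nat.sInf_mem (hne a b)
  have hle3 : ∀ a b : V, ddist A a b ≤ 3 := fun a b => by
    obtain ⟨n, hn, hs⟩ := hdiam a b
    exact le_trans (Nat.sInf_le hs) hn
  have htri : ∀ a b c : V, ddist A a b ≤ ddist A a c + ddist A c b := fun a b c =>
    Nat.sInf_le (stepsTo_add A (hmem a c) (hmem c b))
  have hzero : ∀ a b : V, ddist A a b = 0 ↔ a = b := by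
    intro a b
    constructor
    · intro h
      have := hmem a b
      rw [h] at this
      exact this
    · rintro rfl
      exact Nat.le_antisymm (Nat.sInf_le (show stepsTo A 0 a a from rfl)) (Nat.zero_le _)
  have hone : ∀ a b : V, ddist A a b = 1 → A a b := by
    intro a b h
    have := hmem a b
    rw [h] at this
    obtain ⟨w, hw, hw'⟩ := this
    cases hw'
    exact hw
  have honer : ∀ a b : V, A a b → ddist A a b = 1 := by
    intro a b h
    have h1 : ddist A a b ≤ 1 := Nat.sInf_le ⟨b, h, rfl⟩
    have h0 : ddist A a b ≠ 0 := by
      intro h0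
      have hab : a = b := (hzero a b).1 h0
      subst hab
      exact hanti a a ⟨h, h⟩
    omega
  -- sides
  have hside : ∀ a b : V, A a b → (a ∈ X ↔ b ∉ X) := by
    intro a b hab
    have h := (hadj a b).1 (Or.inl hab)
    rcases hpart a with ⟨h1, h2⟩ | ⟨h1, h2⟩ <;>
      rcases hpart b with ⟨h3, h4⟩ | ⟨h3, h4⟩ <;> tauto
  have hXY : ∀ a b : V, a ∈ X → b ∉ X → A a b ∨ A b a := by
    intro a b ha hb
    refine (hadj a b).2 (Or.inl ⟨ha, ?_⟩)
    rcases hpart b with ⟨h1, h2⟩ | ⟨h1, h2⟩ <;> tauto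
  have hpar : ∀ (n : ℕ) (a b : V), stepsTo A n a b → (Even n ↔ (a ∈ X ↔ b ∈ X)) := by
    intro n
    induction n with
    | zero =>
      intro a b h
      cases h
      simp
    | succ n ih =>
      intro a b h
      obtain ⟨w, hw, hs⟩ := h
      have h1 := ih w b hs
      have h2 := hside a w hw
      rw [Nat.even_add_one]
      tauto
  -- distance between u and v is 2
  have hduv : ddist A u v = 2 := by
    have he : Even (ddist A u v) := (hpar _ u v (hmem u v)).2 (by tauto)
    have h3 := hle3 u v
    have h0 : ddist A u v ≠ 0 := fun h => huv ((hzero u v).1 h)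
    obtain ⟨k, hk⟩ := he
    omega
  -- the two distance-3 facts
  have hd3 : ∀ z : V, A z u → A v z → ddist A z v = 3 := by
    intro z h1 h2
    have hz : z ∉ X := by
      have := hside z u h1; tauto
    have hodd : ¬ Even (ddist A z v) := by
      intro he
      have := (hpar _ z v (hmem z v)).1 he
      tauto
    have h3 := hle3 z v
    have hne1 : ddist A z v ≠ 1 := by
      intro h
      exact hanti z v ⟨hone z v h, h2⟩
    rw [Nat.even_iff] at hodd
    omega
  have hd3' : ∀ z : V, A z u → A v z → ddist A u z = 3 := by
    intro z h1 h2
    have hz : z ∉ X := by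
      have := hside z u h1; tauto
    have hodd : ¬ Even (ddist A u z) := by
      intro he
      have := (hpar _ u z (hmem u z)).1 he
      tauto
    have h3 := hle3 u z
    have hne1 : ddist A u z ≠ 1 := by
      intro h
      exact hanti z u ⟨h1, hone u z h⟩
    rw [Nat.even_iff] at hodd
    omega
  have hmain : line A u v = {u, v} ∪ ({z | A u z} ∩ {z | A z v}) ∪ ({z | A z u} ∩ {z | A v z}) := by
    ext z
    simp only [line, _root_.btw, Set.mem_setOf_eq, Set.mem_union, Set.mem_inter_iff,
      Set.mem_insert_iff, Set.mem_singleton_iff]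
    constructor
    · rintro (h | h | h)
      · -- ddist z v = ddist z u + ddist u v
        rw [hduv] at h
        have h3 := hle3 z v
        have hzu : ddist A z u ≤ 1 := by omega
        rcases Nat.lt_or_ge (ddist A z u) 1 with hlt | hge
        · have : z = u := (hzero z u).1 (by omega)
          exact Or.inl (Or.inl (Or.inl this))
        · have hzu1 : ddist A z u = 1 := le_antisymm hzu hge
          have hAzu : A z u := hone z u hzu1
          have hznX : z ∉ X := by have := hside z u hAzu; tauto
          have hnAzv : ¬ A z v := by
            intro hc
            have := honer z v hc
            omega
          have hAvz : A v z := by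
            rcases hXY v z hv hznX with hc | hc
            · exact hc
            · exact absurd hc hnAzv
          exact Or.inr ⟨hAzu, hAvz⟩
      · -- ddist u z = ddist u v + ddist v z
        rw [hduv] at h
        have h3 := hle3 u z
        have hvz : ddist A v z ≤ 1 := by omega
        rcases Nat.lt_or_ge (ddist A v z) 1 with hlt | hge
        · have : v = z := (hzero v z).1 (by omega)
          exact Or.inl (Or.inl (Or.inr this.symm))
        · have hvz1 : ddist A v z = 1 := le_antisymm hvz hge
          have hAvz : A v z := hone v z hvz1
          have hznX : z ∉ X := by have := hside v z hAvz; tauto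
          have hnAuz : ¬ A u z := by
            intro hc
            have := honer u z hc
            omega
          have hAzu : A z u := by
            rcases hXY u z hu hznX with hc | hc
            · exact absurd hc hnAuz
            · exact hc
          exact Or.inr ⟨hAzu, hAvz⟩
      · -- ddist u v = ddist u z + ddist z v
        rw [hduv] at h
        rcases Nat.lt_or_ge (ddist A u z) 1 with hlt | hge
        · exact Or.inl (Or.inl (Or.inl ((hzero u z).1 (by omega)).symm))
        · rcases Nat.lt_or_ge (ddist A z v) 1 with hlt2 | hge2
          · exact Or.inl (Or.inl (Or.inr ((hzero z v).1 (by omega))))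
          · have h1 : ddist A u z = 1 := by omega
            have h2 : ddist A z v = 1 := by omega
            exact Or.inl (Or.inr ⟨hone u z h1, hone z v h2⟩)
    · rintro (((h | h) | ⟨h1, h2⟩) | ⟨h1, h2⟩)
      · refine Or.inr (Or.inr ?_)
        rw [h]
        have : ddist A u u = 0 := (hzero u u).2 rfl
        omega
      · refine Or.inr (Or.inr ?_)
        rw [h]
        have : ddist A v v = 0 := (hzero v v).2 rfl
        omega
      · refine Or.inr (Or.inr ?_)
        rw [hduv, honer u z h1, honer z v h2]
      · refine Or.inl ?_
        rw [hduv, hd3 z h1 h2, honer z u h1]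
  refine ⟨hmain, ?_⟩
  ext z
  simp only [Set.mem_inter_iff, hmain, Set.mem_union, Set.mem_insert_iff,
    Set.mem_singleton_iff, Set.mem_setOf_eq]
  constructor
  · rintro ⟨(h | ⟨h1, h2⟩) | ⟨h1, h2⟩, hzX⟩
    · exact h
    · have := hside u z h1; tauto
    · have := hside z u h1; tauto
  · rintro (rfl | rfl)
    · exact ⟨Or.inl (Or.inl (Or.inl rfl)), hu⟩
    · exact ⟨Or.inl (Or.inl (Or.inr rfl)), hv⟩
end

section
/- Let B be an orientation of a complete bipartite graph of oriented diameter at most three, and let uv be an arc of B. Then line(u,v) ∩ u⁺ = {v} and line(u,v) ∩ v⁻ = {u}, and line(u,v) = {u,v} ∪ u⁻ ∪ v⁺. -/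
open scoped Classical

theorem stmt17 {V : Type*} [Fintype V] (A : V → V → Prop)
    (X Y : Set V)
    (hpart : ∀ v : V, (v ∈ X ∧ v ∉ Y) ∨ (v ∈ Y ∧ v ∉ X))
    (hanti : ∀ u v : V, ¬ (A u v ∧ A v u))
    (hadj : ∀ u v : V, (A u v ∨ A v u) ↔ ((u ∈ X ∧ v ∈ Y) ∨ (u ∈ Y ∧ v ∈ X)))
    (hdiam : ∀ u v : V, ∃ n : ℕ, n ≤ 3 ∧ stepsTo A n u v)
    (u v : V) (huv : A u v) :
    line A u v ∩ {z | A u z} = {v} ∧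
    line A u v ∩ {z | A z v} = {u} ∧
    line A u v = {u, v} ∪ {z | A z u} ∪ {z | A v z} := by
  classical
  have hne : ∀ a b : V, {n : ℕ | stepsTo A n a b}.Nonempty := by
    intro a b; obtain ⟨n, _, hs⟩ := hdiam a b; exact ⟨n, hs⟩
  have hmem : ∀ a b : V, stepsTo A (ddist A a b) a b := fun a b => Nat.sInf_mem (hne a b)
  have hle3 : ∀ a b : V, ddist A a b ≤ 3 := by
    intro a b; obtain ⟨n, hn, hs⟩ := hdiam a b
    exact le_trans (Nat.sInf_le hs) hn
  have harc : ∀ a b : V, A a b → ¬(a ∈ X ↔ b ∈ X) := by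
    intro a b hab
    have h := (hadj a b).1 (Or.inl hab)
    have ha := hpart a; have hb := hpart b
    tauto
  have hparity : ∀ n (a b : V), stepsTo A n a b → ((a ∈ X ↔ b ∈ X) ↔ Even n) := by
    intro n
    induction n with
    | zero =>
      intro a b h
      simp only [stepsTo] at h
      subst h; simp
    | succ n ih =>
      rintro a b ⟨w, haw, hs⟩
      have h1 := harc a w haw
      have h2 := ih w b hs
      simp only [Nat.even_add_one]
      tauto
  have hstep1 : ∀ a b : V, stepsTo A 1 a b ↔ A a b := by
    intro a b
    constructor
    · rintro ⟨w, h, h'⟩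
      simp only [stepsTo] at h'
      subst h'; exact h
    · intro h; exact ⟨b, h, rfl⟩
  have hd0' : ∀ a : V, ddist A a a = 0 := by
    intro a
    apply Nat.sInf_eq_zero.2
    left
    show stepsTo A 0 a a
    simp [stepsTo]
  have hd0 : ∀ a b : V, ddist A a b = 0 → a = b := by
    intro a b h
    have hm := hmem a b; rw [h] at hm
    simpa [stepsTo] using hm
  have hd1 : ∀ a b : V, A a b → ddist A a b = 1 := by
    intro a b hab
    have hle : ddist A a b ≤ 1 := Nat.sInf_le ((hstep1 a b).2 hab)
    have hne' : a ≠ b := by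
      intro h; exact harc a b hab (by rw [h])
    have h0 : ddist A a b ≠ 0 := fun h => hne' (hd0 a b h)
    omega
  have hd2 : ∀ a b : V, a ≠ b → (a ∈ X ↔ b ∈ X) → ddist A a b = 2 := by
    intro a b hne' hside
    have he : Even (ddist A a b) := (hparity _ a b (hmem a b)).1 hside
    have h3 := hle3 a b
    have h0 : ddist A a b ≠ 0 := fun h => hne' (hd0 a b h)
    obtain ⟨k, hk⟩ := he; omega
  have hd3 : ∀ a b : V, ¬(a ∈ X ↔ b ∈ X) → ¬ A a b → ddist A a b = 3 := by
    intro a b hside hnab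
    have he : ¬ Even (ddist A a b) := fun h => hside ((hparity _ a b (hmem a b)).2 h)
    have h3 := hle3 a b
    have h1 : ddist A a b ≠ 1 := by
      intro h
      have hm := hmem a b; rw [h] at hm
      exact hnab ((hstep1 a b).1 hm)
    rcases Nat.even_or_odd (ddist A a b) with h | h
    · exact absurd h he
    · obtain ⟨k, hk⟩ := h; omega
  have hsuv : ¬(u ∈ X ↔ v ∈ X) := harc u v huv
  have hnvu : ¬ A v u := fun h => hanti u v ⟨huv, h⟩
  have huvne : u ≠ v := fun h => hsuv (by rw [h])
  have hduv : ddist A u v = 1 := hd1 u v huv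
  have hadj' : ∀ a b : V, ¬(a ∈ X ↔ b ∈ X) → A a b ∨ A b a := by
    intro a b h
    apply (hadj a b).2
    have ha := hpart a; have hb := hpart b; tauto
  have hline : ∀ z : V, z ∈ line A u v ↔ (z = u ∨ z = v ∨ A z u ∨ A v z) := by
    intro z
    constructor
    · intro hz
      by_cases hzu : z = u
      · exact Or.inl hzu
      by_cases hzv : z = v
      · exact Or.inr (Or.inl hzv)
      by_cases hs : z ∈ X ↔ u ∈ X
      · have hzvs : ¬(z ∈ X ↔ v ∈ X) := by tauto
        rcases hadj' z v hzvs with hzv' | hvz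
        · exfalso
          have hnvz : ¬ A v z := fun h => hanti z v ⟨hzv', h⟩
          have d1 : ddist A z v = 1 := hd1 z v hzv'
          have d2 : ddist A z u = 2 := hd2 z u hzu hs
          have d3 : ddist A u z = 2 := hd2 u z (Ne.symm hzu) (Iff.symm hs)
          have d4 : ddist A v z = 3 := hd3 v z (by tauto) hnvz
          simp only [line, Set.mem_setOf_eq, _root_.btw] at hz
          rw [d1, d2, d3, d4, hduv] at hz
          omega
        · exact Or.inr (Or.inr (Or.inr hvz))
      · rcases hadj' u z (by tauto) with huz | hzu'
        · exfalso
          have hnzu : ¬ A z u := fun h => hanti u z ⟨huz, h⟩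
          have d1 : ddist A u z = 1 := hd1 u z huz
          have d2 : ddist A z u = 3 := hd3 z u (by tauto) hnzu
          have d3 : ddist A z v = 2 := hd2 z v hzv (by tauto)
          have d4 : ddist A v z = 2 := hd2 v z (Ne.symm hzv) (by tauto)
          simp only [line, Set.mem_setOf_eq, _root_.btw] at hz
          rw [d1, d2, d3, d4, hduv] at hz
          omega
        · exact Or.inr (Or.inr (Or.inl hzu'))
    · rintro (rfl | rfl | h | h)
      · refine Or.inr (Or.inr ?_)
        show ddist A _ _ = ddist A _ _ + ddist A _ _
        rw [hd0']
        omega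
      · refine Or.inr (Or.inr ?_)
        show ddist A _ _ = ddist A _ _ + ddist A _ _
        rw [hd0']
        omega
      · -- A z u
        have hszu : ¬(z ∈ X ↔ u ∈ X) := harc z u h
        have hzu : z ≠ u := fun hh => hszu (by rw [hh])
        have hzv : z ≠ v := by rintro rfl; exact hnvu h
        have hnuz : ¬ A u z := fun hh => hanti u z ⟨hh, h⟩
        right; left
        show _root_.btw A u z v
        simp only [_root_.btw]
        have d1 : ddist A u z = 3 := hd3 u z (by tauto) hnuz
        have d2 : ddist A v z = 2 := hd2 v z (Ne.symm hzv) (by tauto)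
        rw [d1, d2, hduv]
      · -- A v z
        have hsvz : ¬(v ∈ X ↔ z ∈ X) := harc v z h
        have hzu : z ≠ u := by rintro rfl; exact hnvu h
        have hzv : z ≠ v := fun hh => hsvz (by rw [hh])
        right; left
        show _root_.btw A u z v
        simp only [_root_.btw]
        have d1 : ddist A u z = 2 := hd2 u z (Ne.symm hzu) (by tauto)
        have d2 : ddist A v z = 1 := hd1 v z h
        rw [d1, d2, hduv]
  refine ⟨?_, ?_, ?_⟩
  · ext z
    simp only [Set.mem_inter_iff, Set.mem_setOf_eq, Set.mem_singleton_iff, hline]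
    constructor
    · rintro ⟨h1 | h1 | h1 | h1, h2⟩
      · exfalso; rw [h1] at h2; exact harc u u h2 Iff.rfl
      · exact h1
      · exact absurd ⟨h2, h1⟩ (hanti u z)
      · exfalso
        have s1 := harc v z h1
        have s2 := harc u z h2
        tauto
    · rintro rfl; exact ⟨Or.inr (Or.inl rfl), huv⟩
  · ext z
    simp only [Set.mem_inter_iff, Set.mem_setOf_eq, Set.mem_singleton_iff, hline]
    constructor
    · rintro ⟨h1 | h1 | h1 | h1, h2⟩
      · exact h1
      · exfalso; rw [h1] at h2; exact harc v v h2 Iff.rfl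
      · exfalso
        have s1 := harc z u h1
        have s2 := harc z v h2
        tauto
      · exact absurd ⟨h1, h2⟩ (hanti v z)
    · rintro rfl; exact ⟨Or.inl rfl, huv⟩
  · ext z
    simp only [hline z, Set.mem_union, Set.mem_insert_iff, Set.mem_singleton_iff,
      Set.mem_setOf_eq]
    tauto
end
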